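/- arXiv:2301.06646 — 7 statements merged into one kernel-verified Lean document; each statement's English description precedes it below -/
import Mathlib

section
/- Consider the gateway model with drift bound D ≥ 0, mixing weight β ∈ ℝ and maximal delay K ≥ 1 in a real inner product space H: iterates ω : ℕ → H, a delay function ζ : ℕ → ℕ with ζ(z) ≤ z − 1 and z − ζ(z) ≤ K for all z ≥ 1, updates u : ℕ → H with ‖u(z) − ω(ζ(z))‖ ≤ D for all z ≥ 1, and update rule ω(z) = (1−β)·ω(z−1) + β·u(z) for z ≥ 1; set R(z) = ‖ω(ζ(z)) − ω(z−1)‖² for z ≥ 1 and R(z) = 0 for z ≤ 0. Then for every z ≥ 1: R(z) ≤ 2(K−1)β²·( (K−1)·D² + ∑_{r=1}^{K−1} R(z−r) ). -/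
/-!
Between the stale model `ω (ζ z)` and the current one `ω (z - 1)` lie `m = z - 1 - ζ z ≤ K - 1`
gateway steps, and step `j` moves the model by `β • (u j - ω (j - 1))`, whose norm is at most
`|β| (D + √R j)` by the triangle inequality through `ω (ζ j)`. Telescoping, then Cauchy–Schwarz
over the `m` steps and `(a + b)² ≤ 2 (a² + b²)`, gives `R z ≤ 2 m β² (m D² + ∑ R j)`, where
`j` runs over the last `m` steps; enlarging `m` to `K - 1` costs nothing as `R ≥ 0`.
-/

open Finset

theorem sum_Ico_succ_eq_sum_Icc_sub {M : Type*} [AddCommMonoid M] (f : ℕ → M) {a b : ℕ} :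
    ∑ j ∈ Ico a b, f (j + 1) = ∑ r ∈ Icc 1 (b - a), f (b + 1 - r) := by
  refine sum_nbij' (b - ·) (b - ·) ?_ ?_ ?_ ?_ ?_ <;> intro j hj <;>
    simp only [mem_Ico, mem_Icc] at hj ⊢
  all_goals first | omega | (congr 1; omega)

theorem sq_sum_add_le_two_mul_card_mul_sum {ι : Type*} (s : Finset ι) (f g : ι → ℝ) :
    (∑ i ∈ s, (f i + g i)) ^ 2 ≤ 2 * #s * ∑ i ∈ s, (f i ^ 2 + g i ^ 2) :=
  calc (∑ i ∈ s, (f i + g i)) ^ 2 ≤ #s * ∑ i ∈ s, (f i + g i) ^ 2 := sq_sum_le_card_mul_sum_sq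
    _ ≤ #s * ∑ i ∈ s, 2 * (f i ^ 2 + g i ^ 2) := by gcongr with i; exact add_sq_le
    _ = 2 * #s * ∑ i ∈ s, (f i ^ 2 + g i ^ 2) := by rw [← mul_sum]; ring

section
variable {E : Type*} [SeminormedAddCommGroup E]

theorem norm_sub_le_sum_Ico_norm_sub (f : ℕ → E) {a b : ℕ} (hab : a ≤ b) :
    ‖f b - f a‖ ≤ ∑ j ∈ Ico a b, ‖f (j + 1) - f j‖ := by
  simpa only [dist_eq_norm, norm_sub_rev] using dist_le_Ico_sum_dist f hab

variable [NormedSpace ℝ E]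

theorem norm_one_sub_smul_add_smul_sub_le (β : ℝ) (x u v : E) :
    ‖((1 - β) • x + β • u) - x‖ ≤ |β| * (‖u - v‖ + ‖v - x‖) := by
  have hmix : ((1 - β) • x + β • u) - x = β • (u - x) := by module
  rw [hmix, norm_smul, Real.norm_eq_abs]
  gcongr
  exact norm_sub_le_norm_sub_add_norm_sub u v x

theorem norm_sub_sq_le_of_mixing_recursion {D β : ℝ} {ω u : ℕ → E} {ζ : ℕ → ℕ}
    (hω : ∀ j, ω (j + 1) = (1 - β) • ω j + β • u (j + 1))
    (hu : ∀ j, ‖u (j + 1) - ω (ζ (j + 1))‖ ≤ D) {a b : ℕ} (hab : a ≤ b) :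
    ‖ω a - ω b‖ ^ 2 ≤ 2 * (b - a : ℕ) * β ^ 2 *
      ((b - a : ℕ) * D ^ 2 + ∑ j ∈ Ico a b, ‖ω (ζ (j + 1)) - ω j‖ ^ 2) := by
  have hstep (j : ℕ) : ‖ω (j + 1) - ω j‖ ≤ |β| * (D + ‖ω (ζ (j + 1)) - ω j‖) := by
    rw [hω j]
    exact (norm_one_sub_smul_add_smul_sub_le β _ _ (ω (ζ (j + 1)))).trans (by gcongr; exact hu j)
  calc ‖ω a - ω b‖ ^ 2
      ≤ (|β| * ∑ j ∈ Ico a b, (D + ‖ω (ζ (j + 1)) - ω j‖)) ^ 2 := by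
        rw [norm_sub_rev, mul_sum]
        gcongr
        exact (norm_sub_le_sum_Ico_norm_sub ω hab).trans (sum_le_sum fun j _ => hstep j)
    _ ≤ β ^ 2 * (2 * (b - a : ℕ) * ∑ j ∈ Ico a b, (D ^ 2 + ‖ω (ζ (j + 1)) - ω j‖ ^ 2)) := by
        rw [mul_pow, sq_abs, ← Nat.card_Ico]
        gcongr
        exact sq_sum_add_le_two_mul_card_mul_sum _ _ _
    _ = _ := by
        rw [sum_add_distrib, sum_const, Nat.card_Ico, nsmul_eq_mul]
        ring

end

theorem asyncHFL_gateway_delay_recursion_general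
    {H : Type*} [NormedAddCommGroup H] [InnerProductSpace ℝ H]
    (D β : ℝ) (K : ℕ)
    (ω u : ℕ → H) (ζ : ℕ → ℕ) (R : ℤ → ℝ)
    (hζ : ∀ z : ℕ, 1 ≤ z → ζ z ≤ z - 1)
    (hζK : ∀ z : ℕ, 1 ≤ z → z - ζ z ≤ K)
    (hu : ∀ z : ℕ, 1 ≤ z → ‖u z - ω (ζ z)‖ ≤ D)
    (hω : ∀ z : ℕ, 1 ≤ z → ω z = (1 - β) • ω (z - 1) + β • u z)
    (hR : ∀ z : ℕ, 1 ≤ z → R z = ‖ω (ζ z) - ω (z - 1)‖ ^ 2)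
    (hR0 : ∀ z : ℤ, z ≤ 0 → R z = 0) :
    ∀ z : ℕ, 1 ≤ z →
      R z ≤ 2 * ((K : ℝ) - 1) * β ^ 2 *
        (((K : ℝ) - 1) * D ^ 2 + ∑ r ∈ Finset.Icc 1 (K - 1), R ((z : ℤ) - (r : ℤ))) := by
  have hR_nonneg (y : ℤ) : 0 ≤ R y := by
    rcases le_or_gt y 0 with hy | hy
    · exact (hR0 y hy).ge
    · lift y to ℕ using hy.le
      rw [hR y (by exact_mod_cast hy)]
      positivity
  intro z hz
  have hlag : z - 1 - ζ z + 1 ≤ K := by have := hζ z hz; have := hζK z hz; omega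
  have hwindow := norm_sub_sq_le_of_mixing_recursion
    (fun j => by simpa using hω (j + 1) (by omega)) (fun j => hu (j + 1) (by omega)) (hζ z hz)
  have hsum : ∑ j ∈ Ico (ζ z) (z - 1), ‖ω (ζ (j + 1)) - ω j‖ ^ 2
      ≤ ∑ r ∈ Icc 1 (K - 1), R (z - r) :=
    calc _ = ∑ r ∈ Icc 1 (z - 1 - ζ z), R (z - r) := by
          refine (sum_Ico_succ_eq_sum_Icc_sub fun j => ‖ω (ζ j) - ω (j - 1)‖ ^ 2).trans
            (sum_congr rfl fun r hr => ?_)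
          rw [mem_Icc] at hr
          rw [← Nat.cast_sub (by omega), hR _ (by omega)]
          congr <;> omega
      _ ≤ _ := sum_le_sum_of_subset_of_nonneg (Icc_subset_Icc_right (by omega))
          fun r _ _ => hR_nonneg _
  have hlagK : ((z - 1 - ζ z : ℕ) : ℝ) ≤ K - 1 := by
    rw [le_sub_iff_add_le]; exact_mod_cast hlag
  rw [hR z hz]
  refine hwindow.trans ?_
  have hK : (0 : ℝ) ≤ K - 1 := (Nat.cast_nonneg _).trans hlagK
  gcongr

/-- Deterministic counterpart of Lemma 3 (Gateway delay recursion) of the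
Async-HFL convergence analysis: the squared staleness residual
`R(z) = ‖ω(ζ(z)) − ω(z−1)‖²` of an asynchronous gateway with drift bound `D`,
mixing weight `β` and maximal delay `K` satisfies the stated recursion. -/
theorem asyncHFL_gateway_delay_recursion
    {H : Type*} [NormedAddCommGroup H] [InnerProductSpace ℝ H]
    (D β : ℝ) (K : ℕ) (hD : 0 ≤ D) (hK : 1 ≤ K)
    (ω u : ℕ → H) (ζ : ℕ → ℕ) (R : ℤ → ℝ)
    (hζ : ∀ z : ℕ, 1 ≤ z → ζ z ≤ z - 1)
    (hζK : ∀ z : ℕ, 1 ≤ z → z - ζ z ≤ K)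
    (hu : ∀ z : ℕ, 1 ≤ z → ‖u z - ω (ζ z)‖ ≤ D)
    (hω : ∀ z : ℕ, 1 ≤ z → ω z = (1 - β) • ω (z - 1) + β • u z)
    (hR : ∀ z : ℕ, 1 ≤ z → R z = ‖ω (ζ z) - ω (z - 1)‖ ^ 2)
    (hR0 : ∀ z : ℤ, z ≤ 0 → R z = 0) :
    ∀ z : ℕ, 1 ≤ z →
      R z ≤ 2 * ((K : ℝ) - 1) * β ^ 2 *
        (((K : ℝ) - 1) * D ^ 2 + ∑ r ∈ Finset.Icc 1 (K - 1), R ((z : ℤ) - (r : ℤ))) :=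
  asyncHFL_gateway_delay_recursion_general D β K ω u ζ R hζ hζK hu hω hR hR0
end

section
/- Let Z be a positive integer, m a natural number, and A, q ≥ 0 real numbers with q·m ≤ 1/2. Let R : ℤ → ℝ satisfy R(s) ≥ 0 for all s and R(s) = 0 for all s ≤ 0. If R(z) ≤ A + q·∑_{r=1}^{m} R(z−r) for all integers z with 1 ≤ z ≤ Z, then ∑_{z=1}^{Z} R(z) ≤ 2·Z·A. -/
/-!
Summing the recursion over `z = 1, …, Z` bounds the total `S` by `Z·A + q·m·S`: each of the
`m` delayed sums `∑_z R(z - r)` is a shifted copy of `S`, truncated because `R` vanishes on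
nonpositive indices. Since `q·m ≤ 1/2`, this gives `S ≤ Z·A + S/2`.
-/

open Finset

lemma Finset.map_natCastEmbedding_Icc (a b : ℕ) :
    (Icc a b).map Nat.castEmbedding = Icc (a : ℤ) b := by
  ext z
  simp only [mem_map, mem_Icc, Nat.castEmbedding_apply]
  constructor
  · rintro ⟨n, ⟨han, hnb⟩, rfl⟩
    exact ⟨by exact_mod_cast han, by exact_mod_cast hnb⟩
  · rintro ⟨haz, hzb⟩
    exact ⟨z.toNat, ⟨by omega, by omega⟩, by omega⟩

lemma Finset.sum_Icc_natCast {M : Type*} [AddCommMonoid M] (a b : ℕ) (f : ℤ → M) :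
    ∑ n ∈ Icc a b, f n = ∑ z ∈ Icc (a : ℤ) b, f z := by
  rw [← map_natCastEmbedding_Icc, sum_map]
  rfl

section SupportedOnPositives

variable {R : ℤ → ℝ}

lemma sum_Icc_sub_le_sum_Icc (hR : ∀ s, 0 ≤ R s) (hR0 : ∀ s ≤ 0, R s = 0) (N : ℤ)
    {r : ℤ} (hr : 0 ≤ r) :
    ∑ z ∈ Icc 1 N, R (z - r) ≤ ∑ z ∈ Icc 1 N, R z := by
  have hshift : ∑ z ∈ Icc 1 N, R (z - r) = ∑ s ∈ Icc (1 - r) (N - r), R s := by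
    simp only [sub_eq_add_neg, ← map_add_right_Icc, sum_map, addRightEmbedding_apply]
  have hextend : ∑ s ∈ Icc (1 - r) N, R s = ∑ s ∈ Icc 1 N, R s :=
    (sum_subset (Icc_subset_Icc (by omega) le_rfl) fun s hs hs' => by
      simp only [mem_Icc] at hs hs'
      exact hR0 s (by omega)).symm
  calc ∑ z ∈ Icc 1 N, R (z - r)
      = ∑ s ∈ Icc (1 - r) (N - r), R s := hshift
    _ ≤ ∑ s ∈ Icc (1 - r) N, R s :=
        sum_le_sum_of_subset_of_nonneg (Icc_subset_Icc le_rfl (by omega)) fun s _ _ => hR s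
    _ = ∑ s ∈ Icc 1 N, R s := hextend

lemma sum_Icc_sum_delays_le (hR : ∀ s, 0 ≤ R s) (hR0 : ∀ s ≤ 0, R s = 0)
    (N : ℤ) (m : ℕ) :
    ∑ z ∈ Icc 1 N, ∑ r ∈ Icc 1 m, R (z - r) ≤ m * ∑ z ∈ Icc 1 N, R z := by
  rw [sum_comm]
  calc ∑ r ∈ Icc 1 m, ∑ z ∈ Icc 1 N, R (z - r)
      ≤ ∑ _r ∈ Icc 1 m, ∑ z ∈ Icc 1 N, R z :=
        sum_le_sum fun r _ => sum_Icc_sub_le_sum_Icc hR hR0 N (Int.natCast_nonneg r)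
    _ = m * ∑ z ∈ Icc 1 N, R z := by simp

end SupportedOnPositives

theorem asyncHFL_sum_of_recursion_general
    (Z m : ℕ) (A q : ℝ) (hq : 0 ≤ q)
    (hqm : q * (m : ℝ) ≤ 1 / 2) (R : ℤ → ℝ)
    (hRnn : ∀ s : ℤ, 0 ≤ R s) (hR0 : ∀ s : ℤ, s ≤ 0 → R s = 0)
    (hrec : ∀ z : ℤ, 1 ≤ z → z ≤ (Z : ℤ) →
      R z ≤ A + q * ∑ r ∈ Finset.Icc 1 m, R (z - (r : ℤ))) :
    ∑ z ∈ Finset.Icc 1 Z, R (z : ℤ) ≤ 2 * (Z : ℝ) * A := by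
  rw [sum_Icc_natCast, Nat.cast_one]
  set S := ∑ z ∈ Icc (1 : ℤ) Z, R z
  have hS : 0 ≤ S := sum_nonneg fun z _ => hRnn z
  have hsum : S ≤ Z * A + q * (m * S) :=
    calc S ≤ ∑ z ∈ Icc (1 : ℤ) Z, (A + q * ∑ r ∈ Icc 1 m, R (z - r)) :=
          sum_le_sum fun z hz => hrec z (mem_Icc.1 hz).1 (mem_Icc.1 hz).2
      _ = Z * A + q * ∑ z ∈ Icc (1 : ℤ) Z, ∑ r ∈ Icc 1 m, R (z - r) := by
          rw [sum_add_distrib, sum_const, Int.card_Icc, add_sub_cancel_right, Int.toNat_natCast,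
            ← mul_sum, nsmul_eq_mul]
      _ ≤ Z * A + q * (m * S) := by
          gcongr
          exact sum_Icc_sum_delays_le hRnn hR0 _ m
  nlinarith [mul_le_mul_of_nonneg_right hqm hS]

/-- Abstract summation argument used in Lemmas 5 and 10 of the Async-HFL
convergence analysis: a nonnegative sequence vanishing on nonpositive indices
and satisfying `R(z) ≤ A + q·∑_{r=1}^{m} R(z−r)` for `1 ≤ z ≤ Z`, with
`q·m ≤ 1/2`, has total sum at most `2·Z·A`. -/
theorem asyncHFL_sum_of_recursion
    (Z m : ℕ) (hZ : 1 ≤ Z) (A q : ℝ) (hA : 0 ≤ A) (hq : 0 ≤ q)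
    (hqm : q * (m : ℝ) ≤ 1 / 2) (R : ℤ → ℝ)
    (hRnn : ∀ s : ℤ, 0 ≤ R s) (hR0 : ∀ s : ℤ, s ≤ 0 → R s = 0)
    (hrec : ∀ z : ℤ, 1 ≤ z → z ≤ (Z : ℤ) →
      R z ≤ A + q * ∑ r ∈ Finset.Icc 1 m, R (z - (r : ℤ))) :
    ∑ z ∈ Finset.Icc 1 Z, R (z : ℤ) ≤ 2 * (Z : ℝ) * A :=
  asyncHFL_sum_of_recursion_general Z m A q hq hqm R hRnn hR0 hrec
end

section
/- Let Z be a positive integer, m a natural number, and A, q ≥ 0 real numbers with √q·m ≤ 1/2. Let R : ℤ → ℝ satisfy R(s) ≥ 0 for all s and R(s) = 0 for all s ≤ 0. If R(z) ≤ A + q·∑_{r=1}^{m} R(z−r) for all integers z with 1 ≤ z ≤ Z, then ∑_{z=1}^{Z} √(R(z)) ≤ 2·Z·√A. -/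
/-!
Subadditivity of the square root turns the quadratic recursion for `R` into the linear recursion
`√R(z) ≤ √A + √q · ∑_{r=1}^{m} √R(z - r)`. Since the `m` coefficients `√q` sum to at most `1/2`,
the constant `2√A` is a fixed bound for this linear recursion, so by strong induction
`√R(z) ≤ 2√A` for every `z ≤ Z`; summing over `1 ≤ z ≤ Z` gives the claim.
-/

open Finset

namespace Real

-- No sign conditions are needed: `√` is `0` on negative arguments.
theorem sqrt_add_le_add_sqrt (x y : ℝ) : √(x + y) ≤ √x + √y := by
  rw [sqrt_le_iff]
  refine ⟨by positivity, ?_⟩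
  nlinarith [sq_sqrt' (x := x), sq_sqrt' (x := y), le_max_left x 0, le_max_left y 0,
    sqrt_nonneg x, sqrt_nonneg y]

theorem sqrt_sum_le_sum_sqrt {ι : Type*} (s : Finset ι) (f : ι → ℝ) :
    √(∑ i ∈ s, f i) ≤ ∑ i ∈ s, √(f i) :=
  le_sum_of_subadditive _ sqrt_zero.le sqrt_add_le_add_sqrt s f

theorem sqrt_add_mul_sum_le {ι : Type*} (s : Finset ι) (f : ι → ℝ) (a : ℝ) {q : ℝ} (hq : 0 ≤ q) :
    √(a + q * ∑ i ∈ s, f i) ≤ √a + √q * ∑ i ∈ s, √(f i) :=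
  calc √(a + q * ∑ i ∈ s, f i)
      ≤ √a + √q * √(∑ i ∈ s, f i) := by
        rw [← sqrt_mul hq]
        exact sqrt_add_le_add_sqrt _ _
    _ ≤ √a + √q * ∑ i ∈ s, √(f i) := by
        gcongr
        exact sqrt_sum_le_sum_sqrt s f

end Real

theorem le_of_le_add_mul_sum_Icc {u : ℤ → ℝ} {a c B : ℝ} {m : ℕ} {Z : ℤ} (hc : 0 ≤ c)
    (hB : a + c * m * B ≤ B) (hinit : ∀ s ≤ 0, u s ≤ B)
    (hrec : ∀ z, 1 ≤ z → z ≤ Z → u z ≤ a + c * ∑ r ∈ Icc 1 m, u (z - r)) :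
    ∀ z ≤ Z, u z ≤ B := by
  suffices h : ∀ n : ℕ, ∀ z ≤ (n : ℤ), z ≤ Z → u z ≤ B from
    fun z hzZ => h z.toNat z (Int.self_le_toNat z) hzZ
  intro n
  induction n with
  | zero => exact fun z hz _ => hinit z hz
  | succ n ih =>
    intro z hzn hzZ
    rcases le_or_gt z n with hz | hz
    · exact ih z hz hzZ
    have hhist : ∀ r ∈ Icc 1 m, u (z - r) ≤ B := fun r hr =>
      ih _ (by simp only [mem_Icc] at hr; omega) (by simp only [mem_Icc] at hr; omega)
    calc u z ≤ a + c * ∑ r ∈ Icc 1 m, u (z - r) := hrec z (by omega) hzZ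
      _ ≤ a + c * ∑ r ∈ Icc 1 m, B := by gcongr with r hr; exact hhist r hr
      _ = a + c * m * B := by simp [mul_assoc]
      _ ≤ B := hB

theorem asyncHFL_sum_of_sqrt_recursion_general
    (Z m : ℕ) (A q : ℝ) (hq : 0 ≤ q)
    (hqm : Real.sqrt q * (m : ℝ) ≤ 1 / 2) (R : ℤ → ℝ)
    (hR0 : ∀ s : ℤ, s ≤ 0 → R s = 0)
    (hrec : ∀ z : ℤ, 1 ≤ z → z ≤ (Z : ℤ) →
      R z ≤ A + q * ∑ r ∈ Finset.Icc 1 m, R (z - (r : ℤ))) :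
    ∑ z ∈ Finset.Icc 1 Z, Real.sqrt (R (z : ℤ)) ≤ 2 * (Z : ℝ) * Real.sqrt A := by
  have hsqrtA := Real.sqrt_nonneg A
  have hbound : ∀ z ≤ (Z : ℤ), √(R z) ≤ 2 * √A := by
    refine le_of_le_add_mul_sum_Icc (Real.sqrt_nonneg q) (by nlinarith) (fun s hs => ?_)
      (fun z hz1 hzZ => (Real.sqrt_le_sqrt (hrec z hz1 hzZ)).trans
        (Real.sqrt_add_mul_sum_le _ _ _ hq))
    rw [hR0 s hs, Real.sqrt_zero]
    positivity
  calc ∑ z ∈ Icc 1 Z, √(R z) ≤ #(Icc 1 Z) • (2 * √A) :=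
        sum_le_card_nsmul _ _ _ fun z hz => hbound z (by simp only [mem_Icc] at hz; omega)
    _ = 2 * Z * √A := by simp only [Nat.card_Icc, nsmul_eq_mul]; push_cast; ring

/-- Abstract square-root summation argument used in Lemmas 5 and 10 of the
Async-HFL convergence analysis: a nonnegative sequence vanishing on nonpositive
indices and satisfying `R(z) ≤ A + q·∑_{r=1}^{m} R(z−r)` for `1 ≤ z ≤ Z`, with
`√q·m ≤ 1/2`, satisfies `∑_{z=1}^{Z} √(R(z)) ≤ 2·Z·√A`. -/
theorem asyncHFL_sum_of_sqrt_recursion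
    (Z m : ℕ) (hZ : 1 ≤ Z) (A q : ℝ) (hA : 0 ≤ A) (hq : 0 ≤ q)
    (hqm : Real.sqrt q * (m : ℝ) ≤ 1 / 2) (R : ℤ → ℝ)
    (hRnn : ∀ s : ℤ, 0 ≤ R s) (hR0 : ∀ s : ℤ, s ≤ 0 → R s = 0)
    (hrec : ∀ z : ℤ, 1 ≤ z → z ≤ (Z : ℤ) →
      R z ≤ A + q * ∑ r ∈ Finset.Icc 1 m, R (z - (r : ℤ))) :
    ∑ z ∈ Finset.Icc 1 Z, Real.sqrt (R (z : ℤ)) ≤ 2 * (Z : ℝ) * Real.sqrt A :=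
  asyncHFL_sum_of_sqrt_recursion_general Z m A q hq hqm R hR0 hrec
end

section
/- Consider the gateway model with drift bound D ≥ 0, mixing weight β ≥ 0 and maximal delay K ≥ 1 in a real inner product space H: iterates ω : ℕ → H, a delay function ζ : ℕ → ℕ with ζ(z) ≤ z − 1 and z − ζ(z) ≤ K for all z ≥ 1, updates u : ℕ → H with ‖u(z) − ω(ζ(z))‖ ≤ D for all z ≥ 1, and update rule ω(z) = (1−β)·ω(z−1) + β·u(z) for z ≥ 1; set R(z) = ‖ω(ζ(z)) − ω(z−1)‖² for z ≥ 1 and R(z) = 0 for z ≤ 0. If 2√2·β·(K−1)^{3/2} ≤ 1, then for every positive integer Z: ∑_{z=1}^{Z} R(z) ≤ 4·Z·β²·(K−1)²·D² and ∑_{z=1}^{Z} √(R(z)) ≤ 3·Z·β·(K−1)·D. -/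
/-!
Each gateway step moves the model by `β • (u (z + 1) - ω z)`, whose norm is at most
`β (D + ‖ω (ζ (z + 1)) - ω z‖)`, and the stale model `ω (ζ z)` lies at most `K - 1` steps
behind `ω (z - 1)`. So any `M` with `(K - 1) β (D + M) ≤ M` bounds every staleness gap
`‖ω (ζ z) - ω (z - 1)‖`, by strong induction on `z`. The step-size condition gives
`β (K - 1) ≤ 1 / 2`, which makes `M = 2 β (K - 1) D` such a fixed point.
-/

open Finset

lemma mul_le_half_of_two_mul_sqrt_two_mul_rpow_le_one {β : ℝ} (hβ : 0 ≤ β) (n : ℕ)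
    (hcond : 2 * Real.sqrt 2 * β * (n : ℝ) ^ ((3 : ℝ) / 2) ≤ 1) : β * n ≤ 1 / 2 := by
  rcases Nat.eq_zero_or_pos n with rfl | hn
  · norm_num
  have hn1 : (1 : ℝ) ≤ n := by exact_mod_cast hn
  have hpow : (n : ℝ) ≤ (n : ℝ) ^ ((3 : ℝ) / 2) := by
    simpa using Real.rpow_le_rpow_of_exponent_le hn1 (by norm_num : (1 : ℝ) ≤ 3 / 2)
  have hsqrt : 1 ≤ Real.sqrt 2 := Real.one_le_sqrt.mpr (by norm_num)
  calc β * n ≤ β * (n : ℝ) ^ ((3 : ℝ) / 2) := by gcongr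
    _ ≤ Real.sqrt 2 * (β * (n : ℝ) ^ ((3 : ℝ) / 2)) := le_mul_of_one_le_left (by positivity) hsqrt
    _ ≤ 1 / 2 := by linarith

section GatewayRecursion

variable {E : Type*} [SeminormedAddCommGroup E] [NormedSpace ℝ E] {ω u : ℕ → E} {β : ℝ}

lemma gateway_succ_sub (hω : ∀ z : ℕ, 1 ≤ z → ω z = (1 - β) • ω (z - 1) + β • u z) (j : ℕ) :
    ω (j + 1) - ω j = β • (u (j + 1) - ω j) := by
  rw [hω (j + 1) j.succ_pos, Nat.add_sub_cancel]
  module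

lemma norm_stale_sub_le {ζ : ℕ → ℕ} {D M : ℝ} {K : ℕ} (hβ : 0 ≤ β) (hD : 0 ≤ D) (hM : 0 ≤ M)
    (hζ : ∀ z : ℕ, 1 ≤ z → ζ z ≤ z - 1)
    (hζK : ∀ z : ℕ, 1 ≤ z → z - ζ z ≤ K)
    (hu : ∀ z : ℕ, 1 ≤ z → ‖u z - ω (ζ z)‖ ≤ D)
    (hω : ∀ z : ℕ, 1 ≤ z → ω z = (1 - β) • ω (z - 1) + β • u z)
    (hfix : ((K : ℝ) - 1) * (β * (D + M)) ≤ M) :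
    ∀ z : ℕ, 1 ≤ z → ‖ω (ζ z) - ω (z - 1)‖ ≤ M := by
  intro z
  induction z using Nat.strong_induction_on with
  | _ z ih =>
  intro hz
  have hstep : ∀ {j}, ζ z ≤ j → j < z - 1 → dist (ω j) (ω (j + 1)) ≤ β * (D + M) := by
    intro j _ hj
    have hgap : ‖ω (ζ (j + 1)) - ω j‖ ≤ M := by simpa using ih (j + 1) (by omega) (by omega)
    calc dist (ω j) (ω (j + 1)) = β * ‖u (j + 1) - ω j‖ := by
          rw [dist_comm, dist_eq_norm, gateway_succ_sub hω, norm_smul, Real.norm_of_nonneg hβ]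
      _ ≤ β * (D + M) := by
          gcongr
          exact (norm_sub_le_norm_sub_add_norm_sub _ _ _).trans (add_le_add (hu _ (by omega)) hgap)
  have hlag : ((z - 1 - ζ z : ℕ) : ℝ) ≤ (K : ℝ) - 1 := by
    have h : z - 1 - ζ z + 1 ≤ K := by have := hζK z hz; have := hζ z hz; omega
    have : ((z - 1 - ζ z : ℕ) : ℝ) + 1 ≤ K := by exact_mod_cast h
    linarith
  calc ‖ω (ζ z) - ω (z - 1)‖ = dist (ω (ζ z)) (ω (z - 1)) := (dist_eq_norm _ _).symm
    _ ≤ ∑ _j ∈ Ico (ζ z) (z - 1), β * (D + M) := dist_le_Ico_sum_of_dist_le (hζ z hz) hstep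
    _ = ((z - 1 - ζ z : ℕ) : ℝ) * (β * (D + M)) := by rw [sum_const, Nat.card_Ico, nsmul_eq_mul]
    _ ≤ ((K : ℝ) - 1) * (β * (D + M)) := by gcongr
    _ ≤ M := hfix

end GatewayRecursion

lemma sum_Icc_one_le_mul {f : ℕ → ℝ} {C : ℝ} (Z : ℕ) (hf : ∀ z, 1 ≤ z → z ≤ Z → f z ≤ C) :
    ∑ z ∈ Icc 1 Z, f z ≤ Z * C := by
  simpa using sum_le_card_nsmul (Icc 1 Z) f C fun z hz => hf z (mem_Icc.1 hz).1 (mem_Icc.1 hz).2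

theorem asyncHFL_sum_of_gateway_recursion_general
    {H : Type*} [NormedAddCommGroup H] [InnerProductSpace ℝ H]
    (D β : ℝ) (K : ℕ) (hD : 0 ≤ D) (hβ : 0 ≤ β) (hK : 1 ≤ K)
    (hcond : 2 * Real.sqrt 2 * β * ((K : ℝ) - 1) ^ ((3 : ℝ) / 2) ≤ 1)
    (ω u : ℕ → H) (ζ : ℕ → ℕ) (R : ℤ → ℝ)
    (hζ : ∀ z : ℕ, 1 ≤ z → ζ z ≤ z - 1)
    (hζK : ∀ z : ℕ, 1 ≤ z → z - ζ z ≤ K)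
    (hu : ∀ z : ℕ, 1 ≤ z → ‖u z - ω (ζ z)‖ ≤ D)
    (hω : ∀ z : ℕ, 1 ≤ z → ω z = (1 - β) • ω (z - 1) + β • u z)
    (hR : ∀ z : ℕ, 1 ≤ z → R z = ‖ω (ζ z) - ω (z - 1)‖ ^ 2)
    (Z : ℕ) :
    (∑ z ∈ Finset.Icc 1 Z, R (z : ℤ) ≤
        4 * (Z : ℝ) * β ^ 2 * ((K : ℝ) - 1) ^ 2 * D ^ 2) ∧
      (∑ z ∈ Finset.Icc 1 Z, Real.sqrt (R (z : ℤ)) ≤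
        3 * (Z : ℝ) * β * ((K : ℝ) - 1) * D) := by
  have hK1 : ((K - 1 : ℕ) : ℝ) = (K : ℝ) - 1 := by push_cast [hK]; ring
  have hK0 : (0 : ℝ) ≤ (K : ℝ) - 1 := hK1 ▸ Nat.cast_nonneg _
  have hhalf : β * ((K : ℝ) - 1) ≤ 1 / 2 :=
    hK1 ▸ mul_le_half_of_two_mul_sqrt_two_mul_rpow_le_one hβ (K - 1) (hK1 ▸ hcond)
  set M := 2 * β * ((K : ℝ) - 1) * D
  have hfix : ((K : ℝ) - 1) * (β * (D + M)) ≤ M := by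
    nlinarith [mul_nonneg (mul_nonneg hβ hK0) hD]
  have hgap := norm_stale_sub_le hβ hD (by positivity) hζ hζK hu hω hfix
  constructor
  · refine (sum_Icc_one_le_mul (C := M ^ 2) Z fun z hz _ => ?_).trans_eq (by ring)
    rw [hR z hz]
    exact pow_le_pow_left₀ (norm_nonneg _) (hgap z hz) 2
  · refine (sum_Icc_one_le_mul (C := M) Z fun z hz _ => ?_).trans ?_
    · rw [hR z hz, Real.sqrt_sq (norm_nonneg _)]
      exact hgap z hz
    · have : 0 ≤ (Z : ℝ) * β * ((K : ℝ) - 1) * D := by positivity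
      linarith

/-- Deterministic counterpart of Lemma 5 (Sum of gateway recursion) of the
Async-HFL convergence analysis: for an asynchronous gateway with drift bound
`D`, mixing weight `β ≥ 0` and maximal delay `K`, under the step-size condition
`2√2·β·(K−1)^{3/2} ≤ 1`, the staleness residuals `R(z)` and their square roots
have sums bounded by `4Zβ²(K−1)²D²` and `3Zβ(K−1)D` respectively. -/
theorem asyncHFL_sum_of_gateway_recursion
    {H : Type*} [NormedAddCommGroup H] [InnerProductSpace ℝ H]
    (D β : ℝ) (K : ℕ) (hD : 0 ≤ D) (hβ : 0 ≤ β) (hK : 1 ≤ K)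
    (hcond : 2 * Real.sqrt 2 * β * ((K : ℝ) - 1) ^ ((3 : ℝ) / 2) ≤ 1)
    (ω u : ℕ → H) (ζ : ℕ → ℕ) (R : ℤ → ℝ)
    (hζ : ∀ z : ℕ, 1 ≤ z → ζ z ≤ z - 1)
    (hζK : ∀ z : ℕ, 1 ≤ z → z - ζ z ≤ K)
    (hu : ∀ z : ℕ, 1 ≤ z → ‖u z - ω (ζ z)‖ ≤ D)
    (hω : ∀ z : ℕ, 1 ≤ z → ω z = (1 - β) • ω (z - 1) + β • u z)
    (hR : ∀ z : ℕ, 1 ≤ z → R z = ‖ω (ζ z) - ω (z - 1)‖ ^ 2)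
    (hR0 : ∀ z : ℤ, z ≤ 0 → R z = 0)
    (Z : ℕ) (hZ : 1 ≤ Z) :
    (∑ z ∈ Finset.Icc 1 Z, R (z : ℤ) ≤
        4 * (Z : ℝ) * β ^ 2 * ((K : ℝ) - 1) ^ 2 * D ^ 2) ∧
      (∑ z ∈ Finset.Icc 1 Z, Real.sqrt (R (z : ℤ)) ≤
        3 * (Z : ℝ) * β * ((K : ℝ) - 1) * D) :=
  asyncHFL_sum_of_gateway_recursion_general D β K hD hβ hK hcond ω u ζ R hζ hζK hu hω hR Z
end

section
/- Consider the gateway model with drift bound D ≥ 0, mixing weight β ≥ 0 and maximal delay K ≥ 1 in a real inner product space H: iterates ω : ℕ → H, a delay function ζ : ℕ → ℕ with ζ(z) ≤ z − 1 and z − ζ(z) ≤ K for all z ≥ 1, updates u : ℕ → H with ‖u(z) − ω(ζ(z))‖ ≤ D for all z ≥ 1, and update rule ω(z) = (1−β)·ω(z−1) + β·u(z) for z ≥ 1. If 2√2·β·(K−1)^{3/2} ≤ 1, then for every positive integer Z: ‖ω(Z) − ω(0)‖² ≤ 2·Z²·β²·D²·(1 + 4β²(K−1)²). -/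
/-- Deterministic counterpart of Lemma 7 (Gateway iterate difference) of the
Async-HFL convergence analysis: after `Z` asynchronous gateway aggregation
steps with drift bound `D`, mixing weight `β ≥ 0` and maximal delay `K`, under
the step-size condition `2√2·β·(K−1)^{3/2} ≤ 1`, the total displacement of the
gateway model satisfies `‖ω(Z) − ω(0)‖² ≤ 2Z²β²D²(1 + 4β²(K−1)²)`. -/
theorem asyncHFL_gateway_iterate_difference
    {H : Type*} [NormedAddCommGroup H] [InnerProductSpace ℝ H]
    (D β : ℝ) (K : ℕ) (hD : 0 ≤ D) (hβ : 0 ≤ β) (hK : 1 ≤ K)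
    (hcond : 2 * Real.sqrt 2 * β * ((K : ℝ) - 1) ^ ((3 : ℝ) / 2) ≤ 1)
    (ω u : ℕ → H) (ζ : ℕ → ℕ)
    (hζ : ∀ z : ℕ, 1 ≤ z → ζ z ≤ z - 1)
    (hζK : ∀ z : ℕ, 1 ≤ z → z - ζ z ≤ K)
    (hu : ∀ z : ℕ, 1 ≤ z → ‖u z - ω (ζ z)‖ ≤ D)
    (hω : ∀ z : ℕ, 1 ≤ z → ω z = (1 - β) • ω (z - 1) + β • u z)
    (Z : ℕ) (hZ : 1 ≤ Z) :
    ‖ω Z - ω 0‖ ^ 2 ≤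
      2 * (Z : ℝ) ^ 2 * β ^ 2 * D ^ 2 * (1 + 4 * β ^ 2 * ((K : ℝ) - 1) ^ 2) := by
  set x : ℝ := β * ((K : ℝ) - 1) with hxdef
  have hK1 : (0 : ℝ) ≤ (K : ℝ) - 1 := by
    have : (1 : ℝ) ≤ (K : ℝ) := by exact_mod_cast hK
    linarith
  have hx0 : 0 ≤ x := mul_nonneg hβ hK1
  -- step-size condition implies 2x ≤ 1
  have hx : 2 * x ≤ 1 := by
    by_cases hKK : (1 : ℝ) ≤ (K : ℝ) - 1
    · have h1 : ((K : ℝ) - 1) ^ (1 : ℝ) ≤ ((K : ℝ) - 1) ^ ((3 : ℝ) / 2) :=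
        Real.rpow_le_rpow_of_exponent_le hKK (by norm_num)
      rw [Real.rpow_one] at h1
      have h2 : (1 : ℝ) ≤ Real.sqrt 2 := by
        rw [show (1:ℝ) = Real.sqrt 1 by simp]
        exact Real.sqrt_le_sqrt (by norm_num)
      have hA : β * ((K : ℝ) - 1) ≤ β * ((K : ℝ) - 1) ^ ((3 : ℝ) / 2) :=
        mul_le_mul_of_nonneg_left h1 hβ
      have hB : 0 ≤ β * ((K : ℝ) - 1) ^ ((3 : ℝ) / 2) :=
        mul_nonneg hβ (Real.rpow_nonneg hK1 _)
      nlinarith [mul_nonneg (sub_nonneg.2 h2) hB]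
    · push_neg at hKK
      have : K < 2 := by exact_mod_cast (by linarith : (K : ℝ) < 2)
      interval_cases K
      · simp [hxdef]
  set M : ℝ := β * D * (1 + 2 * x) with hMdef
  have hM0 : 0 ≤ M := by positivity
  -- single-step displacement in terms of the update
  have hstep : ∀ z : ℕ, 1 ≤ z → ω z - ω (z - 1) = β • (u z - ω (z - 1)) := by
    intro z hz
    rw [hω z hz]
    module
  -- telescoping chain bound
  have hchain : ∀ b a : ℕ, a ≤ b →
      (∀ j, a < j → j ≤ b → ‖ω j - ω (j - 1)‖ ≤ M) →
      ‖ω b - ω a‖ ≤ ((b : ℝ) - (a : ℝ)) * M := by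
    intro b
    induction b with
    | zero =>
      intro a ha _
      interval_cases a
      simp
    | succ n ih =>
      intro a ha hbd
      rcases eq_or_lt_of_le ha with h | h
      · subst h; simp
      · have ha' : a ≤ n := by omega
        have h1 : ‖ω n - ω a‖ ≤ ((n : ℝ) - (a : ℝ)) * M :=
          ih a ha' (fun j hj1 hj2 => hbd j hj1 (by omega))
        have h2 : ‖ω (n + 1) - ω n‖ ≤ M := by
          have := hbd (n + 1) (by omega) (le_refl _)
          simpa using this
        calc ‖ω (n + 1) - ω a‖ ≤ ‖ω (n + 1) - ω n‖ + ‖ω n - ω a‖ := by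
              have := norm_add_le (ω (n + 1) - ω n) (ω n - ω a)
              simpa using this
          _ ≤ M + ((n : ℝ) - (a : ℝ)) * M := add_le_add h2 h1
          _ = (((n : ℕ) + 1 : ℝ) - (a : ℝ)) * M := by ring
          _ = (((n + 1 : ℕ) : ℝ) - (a : ℝ)) * M := by push_cast; ring
  -- uniform per-step bound by strong induction
  have hdelta : ∀ z : ℕ, 1 ≤ z → ‖ω z - ω (z - 1)‖ ≤ M := by
    intro z
    induction z using Nat.strong_induction_on with
    | _ z ih =>
      intro hz
      have hzeta := hζ z hz
      have hzetaK := hζK z hz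
      have hbd : ∀ j, ζ z < j → j ≤ z - 1 → ‖ω j - ω (j - 1)‖ ≤ M := by
        intro j hj1 hj2
        exact ih j (by omega) (by omega)
      have hchain' : ‖ω (z - 1) - ω (ζ z)‖ ≤ (((z - 1 : ℕ) : ℝ) - (ζ z : ℝ)) * M :=
        hchain (z - 1) (ζ z) hzeta hbd
      have hcast : (((z - 1 : ℕ) : ℝ) - (ζ z : ℝ)) ≤ (K : ℝ) - 1 := by
        have h1 : z - 1 - ζ z ≤ K - 1 := by omega
        have h2 : ζ z ≤ z - 1 := hzeta
        have := (Nat.cast_le (α := ℝ)).2 h1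
        rw [Nat.cast_sub h2, Nat.cast_sub hK] at this
        simpa using this
      have hKM : ‖ω (z - 1) - ω (ζ z)‖ ≤ ((K : ℝ) - 1) * M :=
        hchain'.trans (mul_le_mul_of_nonneg_right hcast hM0)
      have hnorm : ‖ω z - ω (z - 1)‖ ≤ β * (D + ((K : ℝ) - 1) * M) := by
        rw [hstep z hz]
        rw [norm_smul, Real.norm_eq_abs, abs_of_nonneg hβ]
        have : ‖u z - ω (z - 1)‖ ≤ D + ((K : ℝ) - 1) * M := by
          calc ‖u z - ω (z - 1)‖ ≤ ‖u z - ω (ζ z)‖ + ‖ω (ζ z) - ω (z - 1)‖ := by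
                have := norm_add_le (u z - ω (ζ z)) (ω (ζ z) - ω (z - 1))
                simpa using this
            _ ≤ D + ((K : ℝ) - 1) * M := by
                rw [norm_sub_rev (ω (ζ z))]
                exact add_le_add (hu z hz) hKM
        exact mul_le_mul_of_nonneg_left this hβ
      refine hnorm.trans ?_
      have hβD : 0 ≤ β * D := mul_nonneg hβ hD
      rw [hMdef]
      have hxK : β * (((K : ℝ) - 1) * (β * D * (1 + 2 * x))) = x * (β * D) * (1 + 2 * x) := by
        rw [hxdef]; ring
      nlinarith [mul_nonneg hx0 hβD, mul_nonneg (mul_nonneg hx0 hx0) hβD]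
  -- total displacement
  have htot : ‖ω Z - ω 0‖ ≤ (Z : ℝ) * M := by
    have := hchain Z 0 (Nat.zero_le _) (fun j hj1 _ => hdelta j hj1)
    simpa using this
  have hsq : ‖ω Z - ω 0‖ ^ 2 ≤ ((Z : ℝ) * M) ^ 2 :=
    pow_le_pow_left₀ (norm_nonneg _) htot 2
  refine hsq.trans ?_
  rw [hMdef]
  have hZ2 : (0 : ℝ) ≤ (Z : ℝ) ^ 2 * β ^ 2 * D ^ 2 := by positivity
  have key : (1 + 2 * x) ^ 2 ≤ 2 * (1 + 4 * x ^ 2) := by nlinarith [mul_self_nonneg (2 * x - 1)]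
  calc ((Z : ℝ) * (β * D * (1 + 2 * x))) ^ 2
      = (Z : ℝ) ^ 2 * β ^ 2 * D ^ 2 * ((1 + 2 * x) ^ 2) := by ring
    _ ≤ (Z : ℝ) ^ 2 * β ^ 2 * D ^ 2 * (2 * (1 + 4 * x ^ 2)) :=
        mul_le_mul_of_nonneg_left key hZ2
    _ = 2 * (Z : ℝ) ^ 2 * β ^ 2 * D ^ 2 * (1 + 4 * β ^ 2 * ((K : ℝ) - 1) ^ 2) := by
        rw [hxdef]; ring
end

section
/- Let H be a real inner product space and fix reals α, β ≥ 0, D ≥ 0 and integers K_c, K_g, Z ≥ 1 with 2√2·β·(K_g−1)^{3/2} ≤ 1. Consider cloud iterates w : ℕ → H with a delay function τ : ℕ → ℕ satisfying τ(h) ≤ h − 1 and h − τ(h) ≤ K_c for all h ≥ 1, and update rule w(h) = (1−α)·w(h−1) + α·v(h), where for each h ≥ 1 the received model v(h) = ω_h(Z) is produced by a gateway run ω_h : ℕ → H started at ω_h(0) = w(τ(h)) with gateway updates ω_h(z) = (1−β)·ω_h(z−1) + β·u_h(z), gateway delays ζ_h(z) ≤ z − 1, z − ζ_h(z) ≤ K_g,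 and ‖u_h(z) − ω_h(ζ_h(z))‖ ≤ D for all z ≥ 1. Set Q(h) = ‖w(τ(h)) − w(h−1)‖² for h ≥ 1 and Q(h) = 0 for h ≤ 0, and G² = 2Z²β²D²(1 + 4β²(K_g−1)²). Then for every h ≥ 1: Q(h) ≤ 2(K_c−1)α²·( (K_c−1)·G² + ∑_{r=1}^{K_c−1} Q(h−r) ). -/
/-!
Each gateway innovation `u(z+1) − ω(z)` differs from the bounded quantity `u(z+1) − ω(ζ(z+1))`
by at most `K_g − 1` gateway steps of size `β·‖innovation‖`; since `2β(K_g − 1) ≤ 1`, strong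
induction keeps every innovation below `(1 + 2β(K_g − 1))·D ≤ 2D`. Summing `Z` steps bounds the
gateway drift `‖v(h) − w(τ(h))‖² ≤ G²`. On the cloud side `w(h−1) − w(τ(h))` is a sum of at
most `K_c − 1` steps `α(v(j) − w(j−1))`; Cauchy–Schwarz and
`‖v(j) − w(j−1)‖² ≤ 2‖v(j) − w(τ(j))‖² + 2Q(j)` give the recursion.
-/

open Finset

section

variable {E : Type*} [SeminormedAddCommGroup E] [NormedSpace ℝ E]

section Relaxation

variable {x y : ℕ → E} {γ : ℝ} {m n : ℕ}

theorem norm_sub_le_sum_of_relaxation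
    (hx : ∀ z, 1 ≤ z → x z = (1 - γ) • x (z - 1) + γ • y z) (hmn : m ≤ n) :
    ‖x n - x m‖ ≤ ∑ k ∈ Ico m n, |γ| * ‖y (k + 1) - x k‖ := by
  rw [← dist_eq_norm, dist_comm]
  refine dist_le_Ico_sum_of_dist_le hmn fun {k} _ _ => le_of_eq ?_
  have hstep : x (k + 1) - x k = γ • (y (k + 1) - x k) := by
    rw [hx (k + 1) (Nat.le_add_left 1 k), Nat.add_sub_cancel]
    module
  rw [dist_comm, dist_eq_norm, hstep, norm_smul, Real.norm_eq_abs]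

theorem sq_norm_sub_le_of_relaxation
    (hx : ∀ z, 1 ≤ z → x z = (1 - γ) • x (z - 1) + γ • y z) (hmn : m ≤ n) :
    ‖x n - x m‖ ^ 2 ≤ ((n - m : ℕ) : ℝ) * ∑ k ∈ Ico m n, γ ^ 2 * ‖y (k + 1) - x k‖ ^ 2 := by
  calc ‖x n - x m‖ ^ 2 ≤ (∑ k ∈ Ico m n, |γ| * ‖y (k + 1) - x k‖) ^ 2 := by
        gcongr
        exact norm_sub_le_sum_of_relaxation hx hmn
    _ ≤ #(Ico m n) * ∑ k ∈ Ico m n, (|γ| * ‖y (k + 1) - x k‖) ^ 2 := sq_sum_le_card_mul_sum_sq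
    _ = _ := by simp only [Nat.card_Ico, mul_pow, sq_abs]

end Relaxation

section Gateway

variable {ω u : ℕ → E} {ζ : ℕ → ℕ} {β D : ℝ} {K : ℕ}

theorem norm_innovation_le_of_bounded_delay
    (hω : ∀ z, 1 ≤ z → ω z = (1 - β) • ω (z - 1) + β • u z)
    (hζ : ∀ z, 1 ≤ z → ζ z ≤ z - 1) (hζK : ∀ z, 1 ≤ z → z - ζ z ≤ K)
    (hu : ∀ z, 1 ≤ z → ‖u z - ω (ζ z)‖ ≤ D)
    (hβ : 0 ≤ β) (hD : 0 ≤ D) (hβK : 2 * β * ((K : ℝ) - 1) ≤ 1) (k : ℕ) :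
    ‖u (k + 1) - ω k‖ ≤ (1 + 2 * β * ((K : ℝ) - 1)) * D := by
  induction k using Nat.strong_induction_on with
  | _ k ih =>
  have hk : 1 ≤ k + 1 := Nat.le_add_left 1 k
  have hζk : ζ (k + 1) ≤ k := hζ (k + 1) hk
  have hlag : ((k - ζ (k + 1) : ℕ) : ℝ) ≤ (K : ℝ) - 1 := by
    have := hζK (k + 1) hk
    rw [le_sub_iff_add_le]
    exact_mod_cast (by omega : k - ζ (k + 1) + 1 ≤ K)
  have hstale : ‖ω k - ω (ζ (k + 1))‖ ≤ 2 * β * ((K : ℝ) - 1) * D := by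
    calc ‖ω k - ω (ζ (k + 1))‖ ≤ ∑ j ∈ Ico (ζ (k + 1)) k, |β| * ‖u (j + 1) - ω j‖ :=
          norm_sub_le_sum_of_relaxation hω hζk
      _ ≤ ∑ _j ∈ Ico (ζ (k + 1)) k, β * (2 * D) := by
          refine sum_le_sum fun j hj => ?_
          rw [abs_of_nonneg hβ]
          have := ih j (mem_Ico.1 hj).2
          gcongr
          nlinarith
      _ = ((k - ζ (k + 1) : ℕ) : ℝ) * (β * (2 * D)) := by simp
      _ ≤ ((K : ℝ) - 1) * (β * (2 * D)) := by gcongr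
      _ = 2 * β * ((K : ℝ) - 1) * D := by ring
  calc ‖u (k + 1) - ω k‖
      ≤ ‖u (k + 1) - ω (ζ (k + 1))‖ + ‖ω k - ω (ζ (k + 1))‖ := by
        rw [norm_sub_rev (ω k)]
        exact norm_sub_le_norm_sub_add_norm_sub _ _ _
    _ ≤ D + 2 * β * ((K : ℝ) - 1) * D := add_le_add (hu (k + 1) hk) hstale
    _ = (1 + 2 * β * ((K : ℝ) - 1)) * D := by ring

theorem sq_norm_sub_le_of_bounded_delay
    (hω : ∀ z, 1 ≤ z → ω z = (1 - β) • ω (z - 1) + β • u z)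
    (hζ : ∀ z, 1 ≤ z → ζ z ≤ z - 1) (hζK : ∀ z, 1 ≤ z → z - ζ z ≤ K)
    (hu : ∀ z, 1 ≤ z → ‖u z - ω (ζ z)‖ ≤ D)
    (hβ : 0 ≤ β) (hD : 0 ≤ D) (hβK : 2 * β * ((K : ℝ) - 1) ≤ 1) (Z : ℕ) :
    ‖ω Z - ω 0‖ ^ 2 ≤ 2 * (Z : ℝ) ^ 2 * β ^ 2 * D ^ 2 * (1 + 4 * β ^ 2 * ((K : ℝ) - 1) ^ 2) := by
  have hdrift : ‖ω Z - ω 0‖ ≤ Z * β * D * (1 + 2 * β * ((K : ℝ) - 1)) := by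
    calc ‖ω Z - ω 0‖ ≤ ∑ j ∈ Ico 0 Z, |β| * ‖u (j + 1) - ω j‖ :=
          norm_sub_le_sum_of_relaxation hω Z.zero_le
      _ ≤ ∑ _j ∈ Ico 0 Z, β * ((1 + 2 * β * ((K : ℝ) - 1)) * D) := by
          refine sum_le_sum fun j _ => ?_
          rw [abs_of_nonneg hβ]
          gcongr
          exact norm_innovation_le_of_bounded_delay hω hζ hζK hu hβ hD hβK j
      _ = Z * β * D * (1 + 2 * β * ((K : ℝ) - 1)) := by
          rw [sum_const, Nat.card_Ico, Nat.sub_zero, nsmul_eq_mul]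
          ring
  calc ‖ω Z - ω 0‖ ^ 2 ≤ (Z * β * D) ^ 2 * (1 + 2 * β * ((K : ℝ) - 1)) ^ 2 := by
        rw [← mul_pow]
        gcongr
    _ ≤ (Z * β * D) ^ 2 * (2 * (1 ^ 2 + (2 * β * ((K : ℝ) - 1)) ^ 2)) := by
        gcongr
        exact add_sq_le
    _ = _ := by ring

end Gateway

theorem two_mul_mul_le_one_of_two_mul_sqrt_two_mul_rpow_le {β : ℝ} (hβ : 0 ≤ β) (n : ℕ)
    (h : 2 * √2 * β * (n : ℝ) ^ ((3 : ℝ) / 2) ≤ 1) : 2 * β * n ≤ 1 := by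
  have hn : (n : ℝ) ≤ (n : ℝ) ^ ((3 : ℝ) / 2) := by
    rcases n.eq_zero_or_pos with rfl | hn
    · simp
    · exact Real.self_le_rpow_of_one_le (by exact_mod_cast hn) (by norm_num)
  have hsqrt : 1 ≤ √2 := Real.one_le_sqrt.mpr (by norm_num)
  calc 2 * β * n ≤ 2 * 1 * β * (n : ℝ) ^ ((3 : ℝ) / 2) := by rw [mul_one]; gcongr
    _ ≤ 2 * √2 * β * (n : ℝ) ^ ((3 : ℝ) / 2) := by gcongr
    _ ≤ 1 := h

theorem sum_Ico_le_sum_Icc_sub {f : ℤ → ℝ} (hf : ∀ i, 0 ≤ f i) {m h K : ℕ} (hK : h - m ≤ K) :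
    ∑ k ∈ Ico m (h - 1), f (k + 1) ≤ ∑ r ∈ Icc 1 (K - 1), f (h - r) := by
  calc ∑ k ∈ Ico m (h - 1), f (k + 1)
      = ∑ r ∈ (Ico m (h - 1)).image (h - 1 - ·), f (h - r) := by
        rw [sum_image]
        · refine sum_congr rfl fun k hk => ?_
          have := (mem_Ico.1 hk).2
          congr 1
          omega
        · intro a ha b hb hab
          simp only [coe_Ico, Set.mem_Ico] at ha hb hab
          omega
    _ ≤ ∑ r ∈ Icc 1 (K - 1), f (h - r) := by
        refine sum_le_sum_of_subset_of_nonneg ?_ fun _ _ _ => hf _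
        intro r hr
        simp only [mem_image, mem_Ico, mem_Icc] at hr ⊢
        omega

section Cloud

variable {w v : ℕ → E} {τ : ℕ → ℕ} {α G : ℝ} {K : ℕ} {Q : ℤ → ℝ}

theorem delay_recursion_of_sq_norm_stale_innovation_le
    (hτ : ∀ h, 1 ≤ h → τ h ≤ h - 1) (hτK : ∀ h, 1 ≤ h → h - τ h ≤ K)
    (hw : ∀ h, 1 ≤ h → w h = (1 - α) • w (h - 1) + α • v h)
    (hv : ∀ h, 1 ≤ h → ‖v h - w (τ h)‖ ^ 2 ≤ G) (hG : 0 ≤ G)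
    (hQ : ∀ h : ℕ, 1 ≤ h → Q h = ‖w (τ h) - w (h - 1)‖ ^ 2)
    (hQ0 : ∀ h : ℤ, h ≤ 0 → Q h = 0) (h : ℕ) (hh : 1 ≤ h) :
    Q h ≤ 2 * ((K : ℝ) - 1) * α ^ 2 *
      (((K : ℝ) - 1) * G + ∑ r ∈ Icc 1 (K - 1), Q (h - r)) := by
  have hQnn : ∀ i, 0 ≤ Q i := by
    intro i
    rcases le_or_gt i 0 with hi | hi
    · rw [hQ0 i hi]
    · lift i to ℕ using hi.le
      rw [hQ i (by omega)]
      positivity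
  have hinnov : ∀ k : ℕ, ‖v (k + 1) - w k‖ ^ 2 ≤ 2 * G + 2 * Q (k + 1) := by
    intro k
    have hk : 1 ≤ k + 1 := Nat.le_add_left 1 k
    rw [show (k : ℤ) + 1 = ((k + 1 : ℕ) : ℤ) by push_cast; rfl, hQ (k + 1) hk, Nat.add_sub_cancel]
    calc ‖v (k + 1) - w k‖ ^ 2
        = ‖(v (k + 1) - w (τ (k + 1))) + (w (τ (k + 1)) - w k)‖ ^ 2 := by
          rw [sub_add_sub_cancel]
      _ ≤ (‖v (k + 1) - w (τ (k + 1))‖ + ‖w (τ (k + 1)) - w k‖) ^ 2 := by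
          gcongr
          exact norm_add_le _ _
      _ ≤ 2 * (‖v (k + 1) - w (τ (k + 1))‖ ^ 2 + ‖w (τ (k + 1)) - w k‖ ^ 2) := add_sq_le
      _ ≤ 2 * G + 2 * ‖w (τ (k + 1)) - w k‖ ^ 2 := by linarith [hv (k + 1) hk]
  have hτh := hτ h hh
  have hlag : ((h - 1 - τ h : ℕ) : ℝ) ≤ (K : ℝ) - 1 := by
    have := hτK h hh
    rw [le_sub_iff_add_le]
    exact_mod_cast (by omega : h - 1 - τ h + 1 ≤ K)
  have hsum := sum_Ico_le_sum_Icc_sub hQnn (hτK h hh)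
  calc Q h = ‖w (h - 1) - w (τ h)‖ ^ 2 := by rw [hQ h hh, norm_sub_rev]
    _ ≤ ((h - 1 - τ h : ℕ) : ℝ) * ∑ k ∈ Ico (τ h) (h - 1), α ^ 2 * ‖v (k + 1) - w k‖ ^ 2 :=
        sq_norm_sub_le_of_relaxation hw hτh
    _ ≤ ((h - 1 - τ h : ℕ) : ℝ) * ∑ k ∈ Ico (τ h) (h - 1), α ^ 2 * (2 * G + 2 * Q (k + 1)) := by
        gcongr with k
        exact hinnov k
    _ = 2 * ((h - 1 - τ h : ℕ) : ℝ) * α ^ 2 *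
          (((h - 1 - τ h : ℕ) : ℝ) * G + ∑ k ∈ Ico (τ h) (h - 1), Q (k + 1)) := by
        simp only [mul_add, sum_add_distrib, ← mul_sum, sum_const, Nat.card_Ico, nsmul_eq_mul]
        ring
    _ ≤ 2 * ((K : ℝ) - 1) * α ^ 2 * (((K : ℝ) - 1) * G + ∑ r ∈ Icc 1 (K - 1), Q (h - r)) := by
        have : 0 ≤ ∑ k ∈ Ico (τ h) (h - 1), Q (k + 1) := sum_nonneg fun _ _ => hQnn _
        have : (0 : ℝ) ≤ (K : ℝ) - 1 := (Nat.cast_nonneg _).trans hlag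
        gcongr

end Cloud

end

theorem asyncHFL_cloud_delay_recursion_general
    {H : Type*} [NormedAddCommGroup H] [InnerProductSpace ℝ H]
    (α β D : ℝ) (Kc Kg Z : ℕ)
    (hβ : 0 ≤ β) (hD : 0 ≤ D)
    (hKg : 1 ≤ Kg)
    (hβcond : 2 * Real.sqrt 2 * β * ((Kg : ℝ) - 1) ^ ((3 : ℝ) / 2) ≤ 1)
    (w v : ℕ → H) (τ : ℕ → ℕ)
    (ωg u : ℕ → ℕ → H) (ζ : ℕ → ℕ → ℕ)
    (Q : ℤ → ℝ) (G2 : ℝ)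
    (hτ : ∀ h : ℕ, 1 ≤ h → τ h ≤ h - 1)
    (hτK : ∀ h : ℕ, 1 ≤ h → h - τ h ≤ Kc)
    (hw : ∀ h : ℕ, 1 ≤ h → w h = (1 - α) • w (h - 1) + α • v h)
    (hv : ∀ h : ℕ, 1 ≤ h → v h = ωg h Z)
    (hω0 : ∀ h : ℕ, 1 ≤ h → ωg h 0 = w (τ h))
    (hωz : ∀ h : ℕ, 1 ≤ h → ∀ z : ℕ, 1 ≤ z →
      ωg h z = (1 - β) • ωg h (z - 1) + β • u h z)
    (hζ : ∀ h : ℕ, 1 ≤ h → ∀ z : ℕ, 1 ≤ z → ζ h z ≤ z - 1)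
    (hζK : ∀ h : ℕ, 1 ≤ h → ∀ z : ℕ, 1 ≤ z → z - ζ h z ≤ Kg)
    (hu : ∀ h : ℕ, 1 ≤ h → ∀ z : ℕ, 1 ≤ z → ‖u h z - ωg h (ζ h z)‖ ≤ D)
    (hQ : ∀ h : ℕ, 1 ≤ h → Q h = ‖w (τ h) - w (h - 1)‖ ^ 2)
    (hQ0 : ∀ h : ℤ, h ≤ 0 → Q h = 0)
    (hG2 : G2 = 2 * (Z : ℝ) ^ 2 * β ^ 2 * D ^ 2 *
      (1 + 4 * β ^ 2 * ((Kg : ℝ) - 1) ^ 2)) :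
    ∀ h : ℕ, 1 ≤ h →
      Q h ≤ 2 * ((Kc : ℝ) - 1) * α ^ 2 *
        (((Kc : ℝ) - 1) * G2 +
          ∑ r ∈ Finset.Icc 1 (Kc - 1), Q ((h : ℤ) - (r : ℤ))) := by
  have hβK : 2 * β * ((Kg : ℝ) - 1) ≤ 1 := by
    have hcast : ((Kg - 1 : ℕ) : ℝ) = (Kg : ℝ) - 1 := by rw [Nat.cast_sub hKg, Nat.cast_one]
    simpa only [hcast] using
      two_mul_mul_le_one_of_two_mul_sqrt_two_mul_rpow_le hβ (Kg - 1) (by rwa [hcast])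
  refine delay_recursion_of_sq_norm_stale_innovation_le hτ hτK hw (fun j hj => ?_)
    (by rw [hG2]; positivity) hQ hQ0
  rw [hv j hj, ← hω0 j hj, hG2]
  exact sq_norm_sub_le_of_bounded_delay (hωz j hj) (hζ j hj) (hζK j hj) (hu j hj) hβ hD hβK Z

/-- Deterministic counterpart of Lemma 8 (Cloud delay recursion) of the
Async-HFL convergence analysis: the squared cloud staleness residual
`Q(h) = ‖w(τ(h)) − w(h−1)‖²`, where each received model `v(h) = ω_h(Z)` is
produced by `Z` asynchronous gateway steps (drift bound `D`, mixing weight `β`,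
maximal gateway delay `K_g`) started from the stale cloud model `w(τ(h))`,
satisfies the stated recursion with `G² = 2Z²β²D²(1 + 4β²(K_g−1)²)`. -/
theorem asyncHFL_cloud_delay_recursion
    {H : Type*} [NormedAddCommGroup H] [InnerProductSpace ℝ H]
    (α β D : ℝ) (Kc Kg Z : ℕ)
    (hα : 0 ≤ α) (hβ : 0 ≤ β) (hD : 0 ≤ D)
    (hKc : 1 ≤ Kc) (hKg : 1 ≤ Kg) (hZ : 1 ≤ Z)
    (hβcond : 2 * Real.sqrt 2 * β * ((Kg : ℝ) - 1) ^ ((3 : ℝ) / 2) ≤ 1)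
    (w v : ℕ → H) (τ : ℕ → ℕ)
    (ωg u : ℕ → ℕ → H) (ζ : ℕ → ℕ → ℕ)
    (Q : ℤ → ℝ) (G2 : ℝ)
    (hτ : ∀ h : ℕ, 1 ≤ h → τ h ≤ h - 1)
    (hτK : ∀ h : ℕ, 1 ≤ h → h - τ h ≤ Kc)
    (hw : ∀ h : ℕ, 1 ≤ h → w h = (1 - α) • w (h - 1) + α • v h)
    (hv : ∀ h : ℕ, 1 ≤ h → v h = ωg h Z)
    (hω0 : ∀ h : ℕ, 1 ≤ h → ωg h 0 = w (τ h))
    (hωz : ∀ h : ℕ, 1 ≤ h → ∀ z : ℕ, 1 ≤ z →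
      ωg h z = (1 - β) • ωg h (z - 1) + β • u h z)
    (hζ : ∀ h : ℕ, 1 ≤ h → ∀ z : ℕ, 1 ≤ z → ζ h z ≤ z - 1)
    (hζK : ∀ h : ℕ, 1 ≤ h → ∀ z : ℕ, 1 ≤ z → z - ζ h z ≤ Kg)
    (hu : ∀ h : ℕ, 1 ≤ h → ∀ z : ℕ, 1 ≤ z → ‖u h z - ωg h (ζ h z)‖ ≤ D)
    (hQ : ∀ h : ℕ, 1 ≤ h → Q h = ‖w (τ h) - w (h - 1)‖ ^ 2)
    (hQ0 : ∀ h : ℤ, h ≤ 0 → Q h = 0)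
    (hG2 : G2 = 2 * (Z : ℝ) ^ 2 * β ^ 2 * D ^ 2 *
      (1 + 4 * β ^ 2 * ((Kg : ℝ) - 1) ^ 2)) :
    ∀ h : ℕ, 1 ≤ h →
      Q h ≤ 2 * ((Kc : ℝ) - 1) * α ^ 2 *
        (((Kc : ℝ) - 1) * G2 +
          ∑ r ∈ Finset.Icc 1 (Kc - 1), Q ((h : ℤ) - (r : ℤ))) :=
  asyncHFL_cloud_delay_recursion_general α β D Kc Kg Z hβ hD hKg hβcond w v τ ωg u ζ Q G2 hτ hτK hw
    hv hω0 hωz hζ hζK hu hQ hQ0 hG2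
end

section
/- Consider the cloud model with gateway drift bound G ≥ 0, mixing weight α ≥ 0 and maximal delay K_c ≥ 1 in a real inner product space H: iterates w : ℕ → H, a delay function τ : ℕ → ℕ with τ(h) ≤ h − 1 and h − τ(h) ≤ K_c for all h ≥ 1, received models v : ℕ → H with ‖v(h) − w(τ(h))‖² ≤ G² for all h ≥ 1, and update rule w(h) = (1−α)·w(h−1) + α·v(h); set Q(h) = ‖w(τ(h)) − w(h−1)‖² for h ≥ 1 and Q(h) = 0 for h ≤ 0. If 2√2·α·(K_c−1)^{3/2} ≤ 1, then for every positive integer H: ∑_{h=1}^{H} Q(h) ≤ 4·H·α²·(K_c−1)²·G² and ∑_{h=1}^{H} √(Q(h)) ≤ 3·H·α·(K_c−1)·G. -/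
/-!
Write `k = K_c − 1` and `B = 2αkG`. The staleness `‖w(τ h) − w(h−1)‖` is a sum of at most `k`
consecutive increments, and each increment `w(j+1) − w j = α (v(j+1) − w j)` has norm at most
`α (G + ‖w(τ(j+1)) − w j‖)`, an earlier staleness. So if all earlier stalenesses are at most `B`,
the current one is at most `kα(G + B) = αkG (1 + 2αk)`, which is again at most `B` as soon as
`αk ≤ 1/2`; the step-size condition gives exactly this. Both sums are then bounded termwise.
-/

open Finset

lemma mul_le_half_of_two_mul_sqrt_two_mul_rpow_le_one_s14 {α : ℝ} (hα : 0 ≤ α) (n : ℕ)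
    (h : 2 * √2 * α * (n : ℝ) ^ ((3 : ℝ) / 2) ≤ 1) : α * n ≤ 1 / 2 := by
  rcases Nat.eq_zero_or_pos n with rfl | hn
  · norm_num
  have hn_le : (n : ℝ) ≤ (n : ℝ) ^ ((3 : ℝ) / 2) := by
    simpa using Real.rpow_le_rpow_of_exponent_le (Nat.one_le_cast.mpr hn)
      (by norm_num : (1 : ℝ) ≤ 3 / 2)
  have hsqrt2 : 1 ≤ √2 := Real.one_le_sqrt.mpr (by norm_num)
  have : α * n ≤ α * (n : ℝ) ^ ((3 : ℝ) / 2) := mul_le_mul_of_nonneg_left hn_le hα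
  nlinarith [mul_nonneg hα (n.cast_nonneg : (0 : ℝ) ≤ n)]

lemma norm_one_sub_smul_add_smul_sub_le_s14 {X : Type*} [SeminormedAddCommGroup X] [NormedSpace ℝ X]
    {α : ℝ} (hα : 0 ≤ α) (x y z : X) :
    ‖(1 - α) • x + α • y - x‖ ≤ α * (‖y - z‖ + ‖z - x‖) := by
  calc ‖(1 - α) • x + α • y - x‖ = ‖α • (y - x)‖ := by congr 1; module
    _ = α * ‖y - x‖ := by rw [norm_smul, Real.norm_of_nonneg hα]
    _ ≤ α * (‖y - z‖ + ‖z - x‖) := by gcongr; exact norm_sub_le_norm_sub_add_norm_sub y z x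

lemma norm_sub_le_of_norm_succ_sub_le {X : Type*} [SeminormedAddCommGroup X] {f : ℕ → X}
    {m n : ℕ} (hmn : m ≤ n) {C : ℝ} (hC : ∀ j, m ≤ j → j < n → ‖f (j + 1) - f j‖ ≤ C) :
    ‖f m - f n‖ ≤ (n - m : ℕ) * C := by
  simpa [dist_eq_norm, dist_comm] using
    dist_le_Ico_sum_of_dist_le (f := f) (d := fun _ ↦ C) hmn fun hm hn ↦ by
      simpa [dist_eq_norm, norm_sub_rev] using hC _ hm hn

section CloudModel

variable {X : Type*} [SeminormedAddCommGroup X] [NormedSpace ℝ X]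
  {G α : ℝ} {Kc : ℕ} {w v : ℕ → X} {τ : ℕ → ℕ}

theorem norm_stale_sub_le_s14 (hG : 0 ≤ G) (hα : 0 ≤ α) (hKc : 1 ≤ Kc)
    (hαK : α * ((Kc : ℝ) - 1) ≤ 1 / 2)
    (hτ : ∀ h : ℕ, 1 ≤ h → τ h ≤ h - 1)
    (hτK : ∀ h : ℕ, 1 ≤ h → h - τ h ≤ Kc)
    (hv : ∀ h : ℕ, 1 ≤ h → ‖v h - w (τ h)‖ ≤ G)
    (hw : ∀ h : ℕ, 1 ≤ h → w h = (1 - α) • w (h - 1) + α • v h) (h : ℕ) (hh : 1 ≤ h) :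
    ‖w (τ h) - w (h - 1)‖ ≤ 2 * α * ((Kc : ℝ) - 1) * G := by
  set k : ℝ := (Kc : ℝ) - 1
  set B := 2 * α * k * G
  have hk : 0 ≤ k := sub_nonneg.mpr (Nat.one_le_cast.mpr hKc)
  induction h using Nat.strong_induction_on with
  | _ h ih =>
  have hstep : ∀ j, τ h ≤ j → j < h - 1 → ‖w (j + 1) - w j‖ ≤ α * (G + B) := fun j _ hj ↦ by
    calc ‖w (j + 1) - w j‖ ≤ α * (‖v (j + 1) - w (τ (j + 1))‖ + ‖w (τ (j + 1)) - w j‖) := by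
          simpa [hw (j + 1) (by omega)] using norm_one_sub_smul_add_smul_sub_le_s14 hα (w j) _ _
      _ ≤ α * (G + B) := by
          gcongr
          · exact hv _ (by omega)
          · simpa using ih (j + 1) (by omega) (by omega)
  have hwindow : ((h - 1 - τ h : ℕ) : ℝ) ≤ k := by
    have : h - 1 - τ h ≤ Kc - 1 := by have := hτK h hh; omega
    simpa [k, Nat.cast_sub hKc] using (Nat.cast_le (α := ℝ)).mpr this
  calc ‖w (τ h) - w (h - 1)‖ ≤ ((h - 1 - τ h : ℕ) : ℝ) * (α * (G + B)) :=
        norm_sub_le_of_norm_succ_sub_le (hτ h hh) hstep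
    _ ≤ k * (α * (G + B)) := by gcongr
    _ ≤ B := by nlinarith [mul_nonneg (mul_nonneg hα hk) hG]

end CloudModel

theorem asyncHFL_sum_of_cloud_recursion_general
    {X : Type*} [NormedAddCommGroup X] [InnerProductSpace ℝ X]
    (G α : ℝ) (Kc : ℕ) (hG : 0 ≤ G) (hα : 0 ≤ α) (hKc : 1 ≤ Kc)
    (hcond : 2 * Real.sqrt 2 * α * ((Kc : ℝ) - 1) ^ ((3 : ℝ) / 2) ≤ 1)
    (w v : ℕ → X) (τ : ℕ → ℕ) (Q : ℤ → ℝ)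
    (hτ : ∀ h : ℕ, 1 ≤ h → τ h ≤ h - 1)
    (hτK : ∀ h : ℕ, 1 ≤ h → h - τ h ≤ Kc)
    (hv : ∀ h : ℕ, 1 ≤ h → ‖v h - w (τ h)‖ ^ 2 ≤ G ^ 2)
    (hw : ∀ h : ℕ, 1 ≤ h → w h = (1 - α) • w (h - 1) + α • v h)
    (hQ : ∀ h : ℕ, 1 ≤ h → Q h = ‖w (τ h) - w (h - 1)‖ ^ 2)
    (H : ℕ) :
    (∑ h ∈ Finset.Icc 1 H, Q (h : ℤ) ≤
        4 * (H : ℝ) * α ^ 2 * ((Kc : ℝ) - 1) ^ 2 * G ^ 2) ∧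
      (∑ h ∈ Finset.Icc 1 H, Real.sqrt (Q (h : ℤ)) ≤
        3 * (H : ℝ) * α * ((Kc : ℝ) - 1) * G) := by
  have hk : ((Kc - 1 : ℕ) : ℝ) = (Kc : ℝ) - 1 := by rw [Nat.cast_sub hKc, Nat.cast_one]
  have hαK : α * ((Kc : ℝ) - 1) ≤ 1 / 2 :=
    hk ▸ mul_le_half_of_two_mul_sqrt_two_mul_rpow_le_one_s14 hα _ (hk ▸ hcond)
  set B := 2 * α * ((Kc : ℝ) - 1) * G
  have hB : 0 ≤ B := by have := sub_nonneg.mpr (Nat.one_le_cast.mpr hKc : (1 : ℝ) ≤ Kc); positivity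
  have hsqrtQ : ∀ h ∈ Icc 1 H, √(Q (h : ℤ)) ≤ B := fun h hh ↦ by
    have hh := (mem_Icc.mp hh).1
    rw [hQ h hh, Real.sqrt_sq (norm_nonneg _)]
    exact norm_stale_sub_le_s14 hG hα hKc hαK hτ hτK
      (fun h hh ↦ (pow_le_pow_iff_left₀ (norm_nonneg _) hG two_ne_zero).mp (hv h hh)) hw h hh
  have hQ_le : ∀ h ∈ Icc 1 H, Q (h : ℤ) ≤ B ^ 2 := fun h hh ↦ by
    calc Q h = √(Q h) ^ 2 := (Real.sq_sqrt (hQ h (mem_Icc.mp hh).1 ▸ sq_nonneg _)).symm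
      _ ≤ B ^ 2 := pow_le_pow_left₀ (Real.sqrt_nonneg _) (hsqrtQ h hh) 2
  have hcard : (#(Icc 1 H) : ℝ) = H := by simp
  refine ⟨(sum_le_card_nsmul _ _ _ hQ_le).trans ?_, (sum_le_card_nsmul _ _ _ hsqrtQ).trans ?_⟩
  · rw [nsmul_eq_mul, hcard]; exact (by ring : (H : ℝ) * B ^ 2 = _).le
  · rw [nsmul_eq_mul, hcard]; nlinarith [mul_nonneg (Nat.cast_nonneg H : (0 : ℝ) ≤ H) hB]

/-- Deterministic counterpart of Lemma 10 (Sum of cloud recursion) of the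
Async-HFL convergence analysis: for asynchronous cloud aggregation with gateway
drift bound `G`, mixing weight `α ≥ 0` and maximal delay `K_c`, under the
step-size condition `2√2·α·(K_c−1)^{3/2} ≤ 1`, the cloud staleness residuals
`Q(h)` and their square roots have sums bounded by `4Hα²(K_c−1)²G²` and
`3Hα(K_c−1)G` respectively. -/
theorem asyncHFL_sum_of_cloud_recursion
    {X : Type*} [NormedAddCommGroup X] [InnerProductSpace ℝ X]
    (G α : ℝ) (Kc : ℕ) (hG : 0 ≤ G) (hα : 0 ≤ α) (hKc : 1 ≤ Kc)
    (hcond : 2 * Real.sqrt 2 * α * ((Kc : ℝ) - 1) ^ ((3 : ℝ) / 2) ≤ 1)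
    (w v : ℕ → X) (τ : ℕ → ℕ) (Q : ℤ → ℝ)
    (hτ : ∀ h : ℕ, 1 ≤ h → τ h ≤ h - 1)
    (hτK : ∀ h : ℕ, 1 ≤ h → h - τ h ≤ Kc)
    (hv : ∀ h : ℕ, 1 ≤ h → ‖v h - w (τ h)‖ ^ 2 ≤ G ^ 2)
    (hw : ∀ h : ℕ, 1 ≤ h → w h = (1 - α) • w (h - 1) + α • v h)
    (hQ : ∀ h : ℕ, 1 ≤ h → Q h = ‖w (τ h) - w (h - 1)‖ ^ 2)
    (hQ0 : ∀ h : ℤ, h ≤ 0 → Q h = 0)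
    (H : ℕ) (hH : 1 ≤ H) :
    (∑ h ∈ Finset.Icc 1 H, Q (h : ℤ) ≤
        4 * (H : ℝ) * α ^ 2 * ((Kc : ℝ) - 1) ^ 2 * G ^ 2) ∧
      (∑ h ∈ Finset.Icc 1 H, Real.sqrt (Q (h : ℤ)) ≤
        3 * (H : ℝ) * α * ((Kc : ℝ) - 1) * G) :=
  asyncHFL_sum_of_cloud_recursion_general G α Kc hG hα hKc hcond w v τ Q hτ hτK hv hw hQ H
end
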